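/- Let α, t ∈ ℂ, let n be a natural number, and let r be an odd natural number. Then Σ_{k=0}^{n+r−1} C(n+r,k) C(n+k+r,r) (α−2t)^{n+r−k} B_{n+k}^{(α)}(t) = −C(2n+2r,r) B_{2n+r}^{(α)}(t). -/

import Mathlib

open scoped BigOperators
open Polynomial Finset

noncomputable section

/-- The formal power series `(e^t - 1)/t` over `ℂ` (constant term `1`). -/
def expSub1DivT : PowerSeries ℂ := PowerSeries.mk fun n => ((n + 1).factorial : ℂ)⁻¹

/-- The formal power series `t/(e^t - 1)` over `ℂ`. -/
def bernoulliBase : PowerSeries ℂ := expSub1DivT⁻¹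

/-- The formal logarithm of a power series with constant term `1`:
`log F = ∑_{k ≥ 1} (-1)^(k+1) (F-1)^k / k`, computed coefficientwise
(only the terms with `k ≤ n` contribute to the `n`-th coefficient). -/
def formalLog (F : PowerSeries ℂ) : PowerSeries ℂ :=
  PowerSeries.mk fun n =>
    ∑ k ∈ Finset.range (n + 1),
      (-1 : ℂ) ^ (k + 1) * (k : ℂ)⁻¹ * PowerSeries.coeff n ((F - 1) ^ k)

/-- The formal exponential of a power series with zero constant term:
`exp H = ∑_{k ≥ 0} H^k / k!`, computed coefficientwise. -/
def formalExp (H : PowerSeries ℂ) : PowerSeries ℂ :=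
  PowerSeries.mk fun n =>
    ∑ k ∈ Finset.range (n + 1), ((k.factorial : ℂ))⁻¹ * PowerSeries.coeff n (H ^ k)

/-- `(t/(e^t - 1))^α := exp (α • log (t/(e^t - 1)))`. -/
def bernoulliBasePow (α : ℂ) : PowerSeries ℂ := formalExp (α • formalLog bernoulliBase)

/-- The generalized Bernoulli numbers `B_n^{(α)}`, defined by
`∑ B_n^{(α)} t^n / n! = (t/(e^t-1))^α`. -/
def genBernoulliNumber (α : ℂ) (n : ℕ) : ℂ :=
  (n.factorial : ℂ) * PowerSeries.coeff n (bernoulliBasePow α)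

/-- The generalized Bernoulli polynomials `B_n^{(α)}(x)`, defined by
`∑ B_n^{(α)}(x) t^n / n! = (t/(e^t-1))^α e^{t x}`; equivalently
`B_n^{(α)}(x) = ∑_{k ≤ n} C(n,k) B_k^{(α)} x^{n-k}`. -/
def genBernoulliPoly (α : ℂ) (n : ℕ) : Polynomial ℂ :=
  ∑ k ∈ Finset.range (n + 1),
    Polynomial.C ((n.choose k : ℂ) * genBernoulliNumber α k) * Polynomial.X ^ (n - k)

/-- `Ω_γ`: the unique `ℂ`-linear endomorphism of `ℂ[X]` with `Ω_γ (X^n) = B_n^{(γ)}(X)`. -/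
def OmegaOp (γ : ℂ) (P : Polynomial ℂ) : Polynomial ℂ :=
  P.sum fun n a => Polynomial.C a * genBernoulliPoly γ n

end

/-!
Let `F(u) = (u/(eᵘ-1))^α e^{tu}`, the exponential generating function of `B_j^{(α)}(t)`.
Since `u/(eᵘ-1)` evaluated at `-u` is `eᵘ · u/(eᵘ-1)`, and `formalLog` turns products into sums
and `formalExp` sums into products (both proved by differentiating), `F(-u) = e^{cu} F(u)` with
`c = α - 2t`; for odd `r`, `G = uʳ F` then satisfies `G(-u) = -e^{cu} G(u)`. Let `Λ` be the linear functional on `ℂ[x]` with `Λ(xʲ) = j! [uʲ] G`.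
The symmetry of `G` reads `Λ(p(-x)) = -Λ(p(x + c))`, so `Λ` kills every polynomial invariant
under `x ↦ -x - c`, in particular `xᵐ (x + c)ᵐ` for `m = n + r`. Expanding `Λ(xᵐ (x + c)ᵐ)`
gives `r!` times the sum of the theorem extended to `k = n + r`, whose last term is the
right-hand side.
-/

open PowerSeries
open scoped Nat

section CommRing

variable {R : Type*} [CommRing R]

theorem coeff_pow_eq_zero_of_lt {B : R⟦X⟧} (hB : constantCoeff B = 0) {n k : ℕ} (h : n < k) :
    coeff n (B ^ k) = 0 :=
  X_pow_dvd_iff.mp (pow_dvd_pow_of_dvd (X_dvd_iff.mpr hB) k) n h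

theorem X_pow_dvd_mk_sub_sum {B : R⟦X⟧} (hB : constantCoeff B = 0) (a : ℕ → R) (N : ℕ) :
    PowerSeries.X ^ N ∣ PowerSeries.mk (fun n => ∑ k ∈ range (n + 1), a k * coeff n (B ^ k)) -
      ∑ k ∈ range N, a k • B ^ k := by
  refine X_pow_dvd_iff.mpr fun m hm => ?_
  simp only [map_sub, coeff_mk, map_sum, LinearMap.map_smul_of_tower, smul_eq_mul, sub_eq_zero]
  refine Finset.sum_subset (range_subset_range.mpr hm) fun k _ hkm => ?_
  rw [coeff_pow_eq_zero_of_lt hB (by simpa using hkm), mul_zero]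

theorem rescale_mk_sum (a : R) (b : ℕ → R) (B : R⟦X⟧) :
    rescale a (PowerSeries.mk fun n => ∑ k ∈ range (n + 1), b k * coeff n (B ^ k)) =
      PowerSeries.mk fun n => ∑ k ∈ range (n + 1), b k * coeff n (rescale a B ^ k) := by
  ext n
  simp only [coeff_rescale, coeff_mk, Finset.mul_sum, ← map_pow]
  exact Finset.sum_congr rfl fun k _ => by ring

theorem rescale_smul (a c : R) (H : R⟦X⟧) : rescale a (c • H) = c • rescale a H := by
  ext n
  simp only [coeff_rescale, PowerSeries.coeff_smul, smul_eq_mul]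
  ring

theorem X_pow_dvd_derivative {f : R⟦X⟧} {N : ℕ} (h : PowerSeries.X ^ (N + 1) ∣ f) :
    PowerSeries.X ^ N ∣ d⁄dX R f := by
  obtain ⟨g, rfl⟩ := h
  rw [Derivation.leibniz, Derivation.leibniz_pow, PowerSeries.derivative_X, pow_succ]
  simp only [smul_eq_mul, nsmul_eq_mul, Nat.add_sub_cancel]
  exact dvd_add (dvd_mul_of_dvd_left (dvd_mul_right _ _) _)
    (dvd_mul_of_dvd_right (dvd_mul_of_dvd_right (dvd_mul_of_dvd_left dvd_rfl _) _) _)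

theorem eq_of_forall_X_pow_dvd_sub {f g : R⟦X⟧} (h : ∀ N, PowerSeries.X ^ N ∣ f - g) : f = g := by
  ext n
  simpa [sub_eq_zero] using X_pow_dvd_iff.mp (h (n + 1)) n n.lt_succ_self

theorem rescale_neg_one_X_pow_mul_of_odd {F E : R⟦X⟧} {r : ℕ} (hr : Odd r)
    (hF : rescale (-1) F = E * F) :
    rescale (-1) (PowerSeries.X ^ r * F) = -(E * (PowerSeries.X ^ r * F)) := by
  rw [map_mul, map_pow, rescale_neg_one_X, hr.neg_pow, hF]
  ring

theorem factorial_mul_coeff_X_pow_mul (A : R⟦X⟧) (j r : ℕ) :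
    ((j + r)! : R) * coeff (j + r) (PowerSeries.X ^ r * A) =
      r ! * (j + r).choose r * (j ! * coeff j A) := by
  rw [PowerSeries.coeff_X_pow_mul, ← Nat.add_choose_mul_factorial_mul_factorial]
  push_cast
  ring

/-- Sends `xʲ` to `j! [uʲ] A`: the umbral functional of the sequence with exponential
generating function `A`. -/
noncomputable def egfPairing (A : R⟦X⟧) : R[X] →ₗ[R] R :=
  Polynomial.lsum fun j => ((j ! : R) * coeff j A) • LinearMap.id

theorem egfPairing_monomial (A : R⟦X⟧) (j : ℕ) (a : R) :
    egfPairing A (monomial j a) = a * (j ! * coeff j A) := by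
  simp [egfPairing, mul_comm]

theorem egfPairing_C_mul_X_pow (A : R⟦X⟧) (j : ℕ) (a : R) :
    egfPairing A (Polynomial.C a * Polynomial.X ^ j) = a * (j ! * coeff j A) := by
  rw [C_mul_X_pow_eq_monomial, egfPairing_monomial]

theorem egfPairing_X_pow (A : R⟦X⟧) (j : ℕ) :
    egfPairing A (Polynomial.X ^ j) = j ! * coeff j A := by
  simpa using egfPairing_C_mul_X_pow A j 1

theorem egfPairing_neg (A : R⟦X⟧) (p : R[X]) : egfPairing (-A) p = -egfPairing A p := by
  induction p using Polynomial.induction_on' with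
  | add p q hp hq => rw [map_add, map_add, hp, hq, neg_add]
  | monomial j a => simp only [egfPairing_monomial, map_neg, mul_neg]

theorem egfPairing_rescale (A : R⟦X⟧) (a : R) (p : R[X]) :
    egfPairing (rescale a A) p = egfPairing A (p.comp (Polynomial.C a * Polynomial.X)) := by
  induction p using Polynomial.induction_on' with
  | add p q hp hq => rw [map_add, hp, hq, add_comp, map_add]
  | monomial j b =>
    rw [← C_mul_X_pow_eq_monomial, mul_comp, C_comp, X_pow_comp, mul_pow, ← C_pow, ← mul_assoc,
      ← C_mul, egfPairing_C_mul_X_pow, egfPairing_C_mul_X_pow, coeff_rescale]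
    ring

theorem egfPairing_X_pow_mul_X_add_C_pow (A : R⟦X⟧) (c : R) (m : ℕ) :
    egfPairing A (Polynomial.X ^ m * (Polynomial.X + Polynomial.C c) ^ m) =
      ∑ k ∈ range (m + 1), (m.choose k : R) * c ^ (m - k) * ((m + k)! * coeff (m + k) A) := by
  rw [add_pow, Finset.mul_sum, map_sum]
  refine Finset.sum_congr rfl fun k _ => ?_
  rw [← C_pow, ← map_natCast Polynomial.C, mul_assoc, ← C_mul, mul_comm (Polynomial.X ^ k),
    ← mul_assoc, mul_comm (Polynomial.X ^ m), mul_assoc, ← pow_add, egfPairing_C_mul_X_pow]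
  ring

theorem X_pow_mul_X_add_C_pow_comp (c : R) (m : ℕ) :
    (Polynomial.X ^ m * (Polynomial.X + Polynomial.C c) ^ m).comp
        (-Polynomial.X - Polynomial.C c) =
      Polynomial.X ^ m * (Polynomial.X + Polynomial.C c) ^ m := by
  simp only [mul_comp, pow_comp, X_comp, add_comp, C_comp, ← mul_pow]
  ring

end CommRing

section CharZeroField

variable {K : Type*} [Field K] [CharZero K]

theorem coeff_rescale_exp (a : K) (n : ℕ) : coeff n (rescale a (exp K)) = a ^ n / n ! := by
  simp [coeff_rescale, coeff_exp, div_eq_mul_inv]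

theorem derivative_rescale_exp (a : K) :
    d⁄dX K (rescale a (exp K)) = PowerSeries.C a * rescale a (exp K) := by
  ext n
  have h := congrArg (PowerSeries.coeff n) (derivative_exp K)
  rw [PowerSeries.coeff_derivative] at h
  rw [PowerSeries.coeff_derivative, coeff_rescale, PowerSeries.coeff_C_mul, coeff_rescale, ← h]
  ring

theorem exp_mul_rescale_neg_one_exp : exp K * rescale (-1) (exp K) = 1 := by
  simpa [rescale_zero] using exp_mul_exp_eq_exp_add (1 : K) (-1)

theorem eq_of_derivative_eq_mul {P E₁ E₂ : K⟦X⟧}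
    (h₀ : constantCoeff E₁ = constantCoeff E₂) (h₁ : d⁄dX K E₁ = P * E₁)
    (h₂ : d⁄dX K E₂ = P * E₂) : E₁ = E₂ := by
  ext n
  induction n using Nat.strong_induction_on with
  | _ n ih =>
    cases n with
    | zero => simpa using h₀
    | succ n =>
      have hd : coeff n (d⁄dX K E₁) = coeff n (d⁄dX K E₂) := by
        rw [h₁, h₂, PowerSeries.coeff_mul, PowerSeries.coeff_mul]
        refine Finset.sum_congr rfl fun p hp => ?_
        rw [ih p.2 (by have := Finset.HasAntidiagonal.mem_antidiagonal.mp hp; omega)]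
      rw [PowerSeries.coeff_derivative, PowerSeries.coeff_derivative] at hd
      exact mul_right_cancel₀ (Nat.cast_add_one_ne_zero n) hd

theorem egfPairing_rescale_exp_mul (A : K⟦X⟧) (a : K) (p : K[X]) :
    egfPairing (rescale a (exp K) * A) p =
      egfPairing A (p.comp (Polynomial.X + Polynomial.C a)) := by
  induction p using Polynomial.induction_on' with
  | add p q hp hq => rw [map_add, hp, hq, add_comp, map_add]
  | monomial j b =>
    rw [← C_mul_X_pow_eq_monomial, mul_comp, C_comp, X_pow_comp, add_pow, Finset.mul_sum,
      map_sum, egfPairing_C_mul_X_pow, mul_comm (rescale a _), PowerSeries.coeff_mul,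
      Finset.Nat.sum_antidiagonal_eq_sum_range_succ_mk, Finset.mul_sum, Finset.mul_sum]
    refine Finset.sum_congr rfl fun l hl => ?_
    have hlj : l ≤ j := Nat.lt_succ_iff.mp (Finset.mem_range.mp hl)
    have hfac : (j.choose l : K) * l ! * (j - l)! = j ! := by
      exact_mod_cast Nat.choose_mul_factorial_mul_factorial hlj
    have hfac₀ : ((j - l)! : K) ≠ 0 := Nat.cast_ne_zero.mpr (Nat.factorial_ne_zero _)
    rw [← C_pow, ← map_natCast Polynomial.C, mul_assoc, ← C_mul, mul_comm (Polynomial.X ^ l),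
      ← mul_assoc (Polynomial.C b), ← C_mul, egfPairing_C_mul_X_pow, coeff_rescale_exp, ← hfac]
    field_simp

theorem egfPairing_eq_zero_of_rescale_neg_one {A : K⟦X⟧} {c : K}
    (hA : rescale (-1) A = -(rescale c (exp K) * A)) {q : K[X]}
    (hq : q.comp (-Polynomial.X - Polynomial.C c) = q) : egfPairing A q = 0 := by
  -- with `p = q(-x)`: `Λ q = Λ (p(-x)) = -Λ (p(x + c)) = -Λ q`
  have key := congrArg (egfPairing · (q.comp (-Polynomial.X))) hA
  simp only [egfPairing_rescale, egfPairing_neg, egfPairing_rescale_exp_mul, comp_assoc,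
    neg_comp, X_comp, map_neg, map_one, neg_mul, one_mul, neg_neg, comp_X, neg_add] at key
  rw [← sub_eq_add_neg, hq] at key
  exact CharZero.eq_neg_self_iff.mp key

end CharZeroField

section FormalExpLog

theorem constantCoeff_formalExp (H : ℂ⟦X⟧) : constantCoeff (formalExp H) = 1 := by
  rw [← coeff_zero_eq_constantCoeff_apply, formalExp, coeff_mk]
  simp

theorem constantCoeff_formalLog (F : ℂ⟦X⟧) : constantCoeff (formalLog F) = 0 := by
  rw [← coeff_zero_eq_constantCoeff_apply, formalLog, coeff_mk]
  simp

theorem rescale_formalExp (a : ℂ) (H : ℂ⟦X⟧) :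
    rescale a (formalExp H) = formalExp (rescale a H) :=
  rescale_mk_sum a _ H

theorem rescale_formalLog (a : ℂ) (F : ℂ⟦X⟧) :
    rescale a (formalLog F) = formalLog (rescale a F) := by
  rw [formalLog, formalLog, rescale_mk_sum, map_sub, map_one]

theorem derivative_sum_inv_factorial_smul_pow (H : ℂ⟦X⟧) (N : ℕ) :
    d⁄dX ℂ (∑ k ∈ range (N + 1), (k ! : ℂ)⁻¹ • H ^ k) =
      d⁄dX ℂ H * ∑ k ∈ range N, (k ! : ℂ)⁻¹ • H ^ k := by
  rw [Finset.sum_range_succ', map_add, map_sum, Finset.mul_sum]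
  simp only [pow_zero, Derivation.map_smul, Derivation.map_one_eq_zero, smul_zero, add_zero,
    Derivation.leibniz_pow, Nat.add_sub_cancel, smul_eq_mul]
  refine Finset.sum_congr rfl fun k _ => ?_
  rw [Nat.factorial_succ, Nat.cast_mul, mul_inv, ← Nat.cast_smul_eq_nsmul ℂ, smul_smul, mul_assoc,
    mul_left_comm, inv_mul_cancel₀ (Nat.cast_ne_zero.mpr k.succ_ne_zero), mul_one, mul_smul_comm,
    mul_comm]

theorem derivative_formalExp {H : ℂ⟦X⟧} (hH : constantCoeff H = 0) :
    d⁄dX ℂ (formalExp H) = d⁄dX ℂ H * formalExp H := by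
  refine eq_of_forall_X_pow_dvd_sub fun N => ?_
  have h₁ := X_pow_dvd_derivative (X_pow_dvd_mk_sub_sum hH (fun k => (k ! : ℂ)⁻¹) (N + 1))
  have h₂ := X_pow_dvd_mk_sub_sum hH (fun k => (k ! : ℂ)⁻¹) N
  convert dvd_sub h₁ (dvd_mul_of_dvd_right h₂ (d⁄dX ℂ H)) using 1
  rw [map_sub, derivative_sum_inv_factorial_smul_pow]
  simp only [formalExp]
  ring

theorem derivative_sum_neg_one_pow_div_smul_pow (F : ℂ⟦X⟧) (N : ℕ) :
    d⁄dX ℂ (∑ k ∈ range (N + 1), ((-1) ^ (k + 1) * (k : ℂ)⁻¹) • (F - 1) ^ k) =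
      (∑ j ∈ range N, (1 - F) ^ j) * d⁄dX ℂ F := by
  rw [Finset.sum_range_succ', map_add, map_sum, Finset.sum_mul]
  simp only [pow_zero, Derivation.map_smul, Derivation.map_one_eq_zero, smul_zero, add_zero,
    Derivation.leibniz_pow, Nat.add_sub_cancel, map_sub, sub_zero, smul_eq_mul]
  refine Finset.sum_congr rfl fun j _ => ?_
  rw [← Nat.cast_smul_eq_nsmul ℂ, smul_smul, mul_assoc,
    inv_mul_cancel₀ (Nat.cast_ne_zero.mpr j.succ_ne_zero), mul_one]
  rw [PowerSeries.smul_eq_C_mul, ← neg_sub F 1, neg_pow (F - 1), map_pow, map_neg, map_one]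
  ring

theorem mul_derivative_formalLog {F : ℂ⟦X⟧} (hF : constantCoeff F = 1) :
    F * d⁄dX ℂ (formalLog F) = d⁄dX ℂ F := by
  have hF₁ : PowerSeries.constantCoeff (F - 1) = 0 := by rw [map_sub, hF, map_one, sub_self]
  refine eq_of_forall_X_pow_dvd_sub fun N => ?_
  have h₁ := X_pow_dvd_derivative
    (X_pow_dvd_mk_sub_sum hF₁ (fun k => (-1) ^ (k + 1) * (k : ℂ)⁻¹) (N + 1))
  have h₂ : PowerSeries.X ^ N ∣ (1 - F) ^ N :=
    pow_dvd_pow_of_dvd (PowerSeries.X_dvd_iff.mpr (by rw [map_sub, hF, map_one, sub_self])) N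
  have hgeom : F * ∑ j ∈ range N, (1 - F) ^ j = 1 - (1 - F) ^ N := by
    simpa using mul_neg_geom_sum (1 - F) N
  convert dvd_sub (dvd_mul_of_dvd_right h₁ F) (dvd_mul_of_dvd_left h₂ (d⁄dX ℂ F)) using 1
  rw [map_sub, derivative_sum_neg_one_pow_div_smul_pow]
  simp only [formalLog]
  linear_combination d⁄dX ℂ F * hgeom

theorem formalLog_eq_of_mul_derivative {F L : ℂ⟦X⟧} (hF : constantCoeff F = 1)
    (hL : constantCoeff L = 0) (h : F * d⁄dX ℂ L = d⁄dX ℂ F) : formalLog F = L := by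
  have hF₀ : F ≠ 0 := fun h₀ => by simp [h₀] at hF
  exact derivative.ext (mul_left_cancel₀ hF₀ ((mul_derivative_formalLog hF).trans h.symm))
    (by rw [constantCoeff_formalLog, hL])

theorem formalLog_mul {F G : ℂ⟦X⟧} (hF : constantCoeff F = 1) (hG : constantCoeff G = 1) :
    formalLog (F * G) = formalLog F + formalLog G := by
  refine formalLog_eq_of_mul_derivative (by rw [map_mul, hF, hG, one_mul])
    (by rw [map_add, constantCoeff_formalLog, constantCoeff_formalLog, add_zero]) ?_
  rw [map_add, Derivation.leibniz, smul_eq_mul, smul_eq_mul, ← mul_derivative_formalLog hF,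
    ← mul_derivative_formalLog hG]
  ring

theorem formalLog_exp : formalLog (exp ℂ) = PowerSeries.X :=
  formalLog_eq_of_mul_derivative constantCoeff_exp constantCoeff_X
    (by rw [PowerSeries.derivative_X, mul_one, derivative_exp])

theorem formalExp_add {H₁ H₂ : ℂ⟦X⟧} (h₁ : constantCoeff H₁ = 0) (h₂ : constantCoeff H₂ = 0) :
    formalExp (H₁ + H₂) = formalExp H₁ * formalExp H₂ := by
  refine eq_of_derivative_eq_mul (P := d⁄dX ℂ (H₁ + H₂))
    (by rw [map_mul, constantCoeff_formalExp, constantCoeff_formalExp, constantCoeff_formalExp,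
      mul_one])
    (derivative_formalExp (by rw [map_add, h₁, h₂, add_zero])) ?_
  rw [Derivation.leibniz, smul_eq_mul, smul_eq_mul, derivative_formalExp h₁,
    derivative_formalExp h₂, map_add]
  ring

theorem formalExp_smul_X (a : ℂ) : formalExp (a • PowerSeries.X) = rescale a (exp ℂ) := by
  refine eq_of_derivative_eq_mul (P := PowerSeries.C a)
    (by rw [constantCoeff_formalExp, ← coeff_zero_eq_constantCoeff_apply, coeff_rescale,
      pow_zero, one_mul, coeff_zero_eq_constantCoeff_apply, constantCoeff_exp])
    ?_ (derivative_rescale_exp a)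
  rw [derivative_formalExp (by simp), Derivation.map_smul, PowerSeries.derivative_X,
    PowerSeries.smul_eq_C_mul, mul_one]

end FormalExpLog

section Bernoulli

theorem expSub1DivT_mul_X : expSub1DivT * PowerSeries.X = exp ℂ - 1 := by
  ext n
  cases n with
  | zero => simp
  | succ n =>
    rw [coeff_succ_mul_X, map_sub, coeff_exp, expSub1DivT, coeff_mk, PowerSeries.coeff_one,
      if_neg n.succ_ne_zero, sub_zero]
    simp

theorem constantCoeff_expSub1DivT : PowerSeries.constantCoeff expSub1DivT = 1 := by
  rw [← coeff_zero_eq_constantCoeff_apply, expSub1DivT, coeff_mk]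
  simp

theorem bernoulliBase_mul_expSub1DivT : bernoulliBase * expSub1DivT = 1 :=
  PowerSeries.inv_mul_cancel _ (by rw [constantCoeff_expSub1DivT]; exact one_ne_zero)

theorem constantCoeff_bernoulliBase : PowerSeries.constantCoeff bernoulliBase = 1 := by
  simpa [constantCoeff_expSub1DivT] using
    congrArg PowerSeries.constantCoeff bernoulliBase_mul_expSub1DivT

theorem rescale_neg_one_expSub1DivT :
    rescale (-1) expSub1DivT = rescale (-1) (exp ℂ) * expSub1DivT := by
  have h := congrArg (rescale (-1 : ℂ)) expSub1DivT_mul_X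
  rw [map_mul, rescale_neg_one_X, map_sub, map_one] at h
  refine mul_right_cancel₀ PowerSeries.X_ne_zero ?_
  rw [mul_assoc, expSub1DivT_mul_X]
  linear_combination -h - exp_mul_rescale_neg_one_exp (K := ℂ)

theorem rescale_neg_one_bernoulliBase : rescale (-1) bernoulliBase = exp ℂ * bernoulliBase := by
  have h₁ : rescale (-1) bernoulliBase * (rescale (-1) (exp ℂ) * expSub1DivT) = 1 := by
    rw [← rescale_neg_one_expSub1DivT, ← map_mul, bernoulliBase_mul_expSub1DivT, map_one]
  have h₂ : rescale (-1) (exp ℂ) * expSub1DivT * (exp ℂ * bernoulliBase) = 1 := by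
    linear_combination (bernoulliBase * expSub1DivT) * exp_mul_rescale_neg_one_exp (K := ℂ) +
      bernoulliBase_mul_expSub1DivT
  exact left_inv_eq_right_inv h₁ h₂

theorem rescale_neg_one_bernoulliBasePow (α : ℂ) :
    rescale (-1) (bernoulliBasePow α) = rescale α (exp ℂ) * bernoulliBasePow α := by
  rw [bernoulliBasePow, rescale_formalExp, rescale_smul, rescale_formalLog,
    rescale_neg_one_bernoulliBase, formalLog_mul constantCoeff_exp constantCoeff_bernoulliBase,
    formalLog_exp, smul_add, formalExp_add (by simp) (by simp [constantCoeff_formalLog]),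
    formalExp_smul_X]

theorem rescale_neg_one_exp_mul_bernoulliBasePow (α t : ℂ) :
    rescale (-1) (rescale t (exp ℂ) * bernoulliBasePow α) =
      rescale (α - 2 * t) (exp ℂ) * (rescale t (exp ℂ) * bernoulliBasePow α) := by
  rw [map_mul, rescale_rescale, rescale_neg_one_bernoulliBasePow, ← mul_assoc, ← mul_assoc,
    exp_mul_exp_eq_exp_add, exp_mul_exp_eq_exp_add]
  ring_nf

theorem eval_genBernoulliPoly (α t : ℂ) (j : ℕ) :
    (genBernoulliPoly α j).eval t = j ! * coeff j (rescale t (exp ℂ) * bernoulliBasePow α) := by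
  rw [← egfPairing_X_pow, egfPairing_rescale_exp_mul, X_pow_comp, add_pow, map_sum,
    genBernoulliPoly, eval_finsetSum]
  refine Finset.sum_congr rfl fun k _ => ?_
  rw [eval_mul, eval_C, eval_pow, eval_X, genBernoulliNumber, ← C_pow,
    ← map_natCast Polynomial.C, mul_assoc (Polynomial.X ^ k), ← C_mul, mul_comm (Polynomial.X ^ k),
    egfPairing_C_mul_X_pow]
  ring

theorem sum_range_succ_choose_mul_genBernoulliPoly_eq_zero (α t : ℂ) (n r : ℕ) (hr : Odd r) :
    ∑ k ∈ range (n + r + 1), ((n + r).choose k : ℂ) * ((n + k + r).choose r : ℂ) *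
      (α - 2 * t) ^ (n + r - k) * (genBernoulliPoly α (n + k)).eval t = 0 := by
  have hvanish := egfPairing_eq_zero_of_rescale_neg_one
    (rescale_neg_one_X_pow_mul_of_odd hr (rescale_neg_one_exp_mul_bernoulliBasePow α t))
    (X_pow_mul_X_add_C_pow_comp (α - 2 * t) (n + r))
  rw [egfPairing_X_pow_mul_X_add_C_pow] at hvanish
  have hterm (k : ℕ) : ((n + r + k)! : ℂ) * coeff (n + r + k)
      (PowerSeries.X ^ r * (rescale t (exp ℂ) * bernoulliBasePow α)) =
        r ! * (n + k + r).choose r * (genBernoulliPoly α (n + k)).eval t := by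
    rw [eval_genBernoulliPoly, show n + r + k = n + k + r by ring, factorial_mul_coeff_X_pow_mul]
  simp only [hterm] at hvanish
  rw [← mul_right_inj' (Nat.cast_ne_zero.mpr r.factorial_ne_zero : (r ! : ℂ) ≠ 0), mul_zero,
    ← hvanish, Finset.mul_sum]
  exact Finset.sum_congr rfl fun k _ => by ring

end Bernoulli

/-- For `α, t ∈ ℂ`, `n ∈ ℕ` and `r` odd:
`∑_{k=0}^{n+r-1} C(n+r,k) C(n+k+r,r) (α-2t)^{n+r-k} B_{n+k}^{(α)}(t)
 = - C(2n+2r,r) B_{2n+r}^{(α)}(t)`. -/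
theorem odd_r_identity (α t : ℂ) (n r : ℕ) (hr : Odd r) :
    ∑ k ∈ Finset.range (n + r),
        ((n + r).choose k : ℂ) * ((n + k + r).choose r : ℂ) * (α - 2 * t) ^ (n + r - k) *
          (genBernoulliPoly α (n + k)).eval t =
    -(((2 * n + 2 * r).choose r : ℂ) * (genBernoulliPoly α (2 * n + r)).eval t) := by
  have h := sum_range_succ_choose_mul_genBernoulliPoly_eq_zero α t n r hr
  rw [Finset.sum_range_succ, Nat.choose_self, Nat.sub_self,
    show n + (n + r) + r = 2 * n + 2 * r by ring, show n + (n + r) = 2 * n + r by ring] at h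
  linear_combination h
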